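/- Consider the coupled error system η̇ = -L'η, θ̃̇ = -Kψψᵀθ̃ - Kψᵀη where L' and K are positive constants, ψ is bounded, and ψ satisfies the persistent excitation condition ∫_t^{t+τ} ψψᵀ ds ⪰ αI for some α, τ > 0. Then both η(t) and θ̃(t) converge to zero as t → ∞. -/

import Mathlib

set_option maxHeartbeats 1000000

open Filter MeasureTheory intervalIntegral Set

lemma bdd_integrable {E : Type*} [NormedAddCommGroup E] {a b : ℝ} (hab : a ≤ b) {f : ℝ → E} {C : ℝ}
    (hm : AEStronglyMeasurable f (volume.restrict (Set.Ioc a b)))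
    (hb : ∀ s ∈ Set.Ioc a b, ‖f s‖ ≤ C) : IntervalIntegrable f volume a b := by
  rw [intervalIntegrable_iff_integrableOn_Ioc_of_le hab]
  refine Integrable.mono' (integrable_const C) hm ?_
  filter_upwards [ae_restrict_mem measurableSet_Ioc] with s hs using hb s hs

lemma jsum_sq {Ju Jη τ A B : ℝ} (h1 : Ju^2 ≤ τ*A) (h2 : Jη^2 ≤ τ*B) :
    (Ju+Jη)^2 ≤ 2*τ*A + 2*τ*B := by
  nlinarith [sq_nonneg (Ju - Jη)]

lemma cs_sq {a b : ℝ} (hab : a ≤ b) {f : ℝ → ℝ}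
    (h1 : IntervalIntegrable f volume a b)
    (h2 : IntervalIntegrable (fun s => f s ^ 2) volume a b) :
    (∫ s in a..b, |f s|) ^ 2 ≤ (b - a) * ∫ s in a..b, f s ^ 2 := by
  set I := ∫ s in a..b, |f s| with hI
  set S := ∫ s in a..b, f s ^ 2 with hS
  set L := b - a with hLdef
  have hL : 0 ≤ L := by simp [hLdef]; linarith
  have hSnn : 0 ≤ S := intervalIntegral.integral_nonneg hab (fun s _ => sq_nonneg _)
  have hInn : 0 ≤ I := intervalIntegral.integral_nonneg hab (fun s _ => abs_nonneg _)
  have key : ∀ ε : ℝ, 0 < ε → 2 * I ≤ ε * S + L / ε := by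
    intro ε hε
    have hpt : ∀ s ∈ Set.Icc a b, 2 * |f s| ≤ ε * f s ^ 2 + 1 / ε := by
      intro s _
      rw [← sub_nonneg]
      have key : ε * f s ^ 2 + 1 / ε - 2 * |f s| = (ε * |f s| - 1) ^ 2 / ε := by
        rw [← sq_abs (f s)]
        field_simp
        ring_nf
      rw [key]
      positivity
    have hint1 : IntervalIntegrable (fun s => 2 * |f s|) volume a b :=
      (h1.abs).const_mul 2
    have hint2 : IntervalIntegrable (fun s => ε * f s ^ 2 + 1 / ε) volume a b :=
      (h2.const_mul ε).add intervalIntegrable_const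
    have := intervalIntegral.integral_mono_on hab hint1 hint2 hpt
    rw [intervalIntegral.integral_const_mul] at this
    rw [intervalIntegral.integral_add (h2.const_mul ε) intervalIntegrable_const] at this
    rw [intervalIntegral.integral_const_mul, intervalIntegral.integral_const] at this
    simp only [smul_eq_mul] at this
    calc 2 * I = 2 * ∫ s in a..b, |f s| := rfl
    _ ≤ ε * S + (b - a) * (1/ε) := this
    _ = ε * S + L / ε := by rw [hLdef]; ring
  by_contra hcon
  push_neg at hcon
  have hIpos : 0 < I := by
    rcases hInn.eq_or_lt with h | h
    · exfalso; rw [← h] at hcon; nlinarith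
    · exact h
  rcases hSnn.eq_or_lt with hS0 | hSpos
  · have := key (L / I + 1) (by positivity)
    rw [← hS0] at this
    have h2 : L / (L / I + 1) < I := by
      rw [div_lt_iff₀ (by positivity)]
      nlinarith [div_nonneg hL hIpos.le, mul_div_cancel₀ L hIpos.ne']
    nlinarith
  · have := key (I / S) (by positivity)
    have h2 : (I / S) * S = I := div_mul_cancel₀ I hSpos.ne'
    have h3 : L / (I / S) = L * S / I := by
      field_simp
    rw [h2, h3] at this
    have h4 : I ≤ L * S / I := by linarith
    rw [le_div_iff₀ hIpos] at h4
    nlinarith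
theorem coupled_error_convergence
    (L' K α τ : ℝ) (hL : 0 < L') (hK : 0 < K) (hα : 0 < α) (hτ : 0 < τ)
    (ψ : ℝ → EuclideanSpace ℝ (Fin 4))
    (hψmeas : Measurable ψ) (M : ℝ) (hψbdd : ∀ t, ‖ψ t‖ ≤ M)
    (hPE : ∀ t ≥ (0:ℝ), ∀ v : EuclideanSpace ℝ (Fin 4),
      α * ‖v‖ ^ 2 ≤ ∫ s in t..(t + τ), (inner ℝ (ψ s) v : ℝ) ^ 2)
    (η : ℝ → ℝ) (θe : ℝ → EuclideanSpace ℝ (Fin 4))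
    (hη : ∀ t ≥ (0:ℝ), HasDerivAt η (-L' * η t) t)
    (hθ : ∀ t ≥ (0:ℝ), HasDerivAt θe
      (-((K * (inner ℝ (ψ t) (θe t) : ℝ)) • ψ t) - (K * η t) • ψ t) t) :
    Tendsto η atTop (nhds 0) ∧ Tendsto θe atTop (nhds 0) := by
  have hM0 : 0 ≤ M := le_trans (norm_nonneg _) (hψbdd 0)
  obtain ⟨u, hu_def⟩ : ∃ u : ℝ → ℝ, u = fun s => (inner ℝ (ψ s) (θe s) : ℝ) := ⟨_, rfl⟩
  -- continuity
  have hθc : ContinuousOn θe (Set.Ici 0) :=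
    fun s hs => ((hθ s hs).continuousAt).continuousWithinAt
  have hηc : ContinuousOn η (Set.Ici 0) :=
    fun s hs => ((hη s hs).continuousAt).continuousWithinAt
  -- η explicit formula
  have hη0 : ∀ t ≥ (0:ℝ), η t = η 0 * Real.exp (-(L' * t)) := by
    intro t ht
    have hg : ∀ x ∈ Set.Icc (0:ℝ) t, (fun s => η s * Real.exp (L' * s)) x
        = η 0 * Real.exp (L' * 0) := by
      apply constant_of_has_deriv_right_zero
      · exact ContinuousOn.mul (hηc.mono (fun s hs => hs.1))
          (Real.continuous_exp.comp (continuous_const.mul continuous_id)).continuousOn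
      · intro x hx
        have he : HasDerivAt (fun s => Real.exp (L' * s)) (Real.exp (L' * x) * L') x := by
          simpa [Function.comp_def] using (Real.hasDerivAt_exp (L' * x)).comp x ((hasDerivAt_id x).const_mul L')
        have hd := (hη x hx.1).mul he
        have hz : -L' * η x * Real.exp (L' * x) + η x * (Real.exp (L' * x) * L') = 0 := by ring
        rw [hz] at hd
        exact hd.hasDerivWithinAt
    have h2 := hg t (Set.mem_Icc.mpr ⟨ht, le_refl t⟩)
    simp only [mul_zero, Real.exp_zero, mul_one] at h2
    rw [← h2, Real.exp_neg]
    field_simp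
  have hηs : ∀ t ≥ (0:ℝ), ∀ s ≥ t, η s = η t * Real.exp (-(L' * (s - t))) := by
    intro t ht s hs
    rw [hη0 s (le_trans ht hs), hη0 t ht, mul_assoc, ← Real.exp_add]
    ring_nf
  have hηdec : ∀ t ≥ (0:ℝ), ∀ s ≥ t, |η s| ≤ |η t| := by
    intro t ht s hs
    rw [hηs t ht s hs, abs_mul, abs_of_pos (Real.exp_pos _)]
    nlinarith [Real.exp_le_one_iff.mpr (by nlinarith : -(L' * (s - t)) ≤ 0), abs_nonneg (η t),
      Real.exp_pos (-(L' * (s - t)))]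
  have hηtend : Tendsto η atTop (nhds 0) := by
    have h1 : Tendsto (fun t : ℝ => η 0 * Real.exp (-(L' * t))) atTop (nhds (η 0 * 0)) := by
      apply Tendsto.const_mul
      apply Real.tendsto_exp_atBot.comp
      exact tendsto_neg_atTop_atBot.comp (Tendsto.const_mul_atTop hL tendsto_id)
    have h2 : (fun t : ℝ => η 0 * Real.exp (-(L' * t))) =ᶠ[atTop] η := by
      filter_upwards [eventually_ge_atTop (0:ℝ)] with t ht using (hη0 t ht).symm
    simpa using h1.congr' h2
  -- constants
  obtain ⟨D, hD_def⟩ : ∃ D : ℝ, D = 4 * K ^ 2 * M ^ 4 * τ ^ 2 := ⟨_, rfl⟩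
  have hD0 : 0 ≤ D := by rw [hD_def]; positivity
  obtain ⟨c₂, hc2_def⟩ : ∃ c : ℝ, c = τ * Real.exp (-(2 * L' * τ)) := ⟨_, rfl⟩
  have hc₂ : 0 < c₂ := by rw [hc2_def]; positivity
  obtain ⟨κ, hκ_def⟩ : ∃ k : ℝ, k = D / (2 * (2 + D)) + 1 / c₂ := ⟨_, rfl⟩
  have hκ0 : 0 < κ := by
    rw [hκ_def]
    have : 0 < D / (2 * (2 + D)) + 1 / c₂ := by positivity
    linarith
  obtain ⟨β, hβ_def⟩ : ∃ b : ℝ, b = (κ + 1 / 2) / (2 * L') := ⟨_, rfl⟩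
  have hβ0 : 0 < β := by rw [hβ_def]; positivity
  have hβκ : 2 * β * L' - 1 / 2 = κ := by rw [hβ_def]; field_simp; ring
  obtain ⟨a, ha_def⟩ : ∃ x : ℝ, x = α / (2 * (2 + D)) := ⟨_, rfl⟩
  have ha0 : 0 < a := by
    rw [ha_def]
    have h22 : (0:ℝ) < 2 * (2 + D) := by linarith
    positivity
  obtain ⟨γ, hγ_def⟩ : ∃ g : ℝ, g = min (2 * K * a) (min (1 / β) (1 / 2)) := ⟨_, rfl⟩
  have hγ0 : 0 < γ := by
    rw [hγ_def]
    exact lt_min (by positivity) (lt_min (by positivity) (by norm_num))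
  have hγhalf : γ ≤ 1 / 2 := by
    rw [hγ_def]; exact le_trans (min_le_right _ _) (min_le_right _ _)
  -- Lyapunov function
  obtain ⟨W, hW_def⟩ : ∃ W : ℝ → ℝ,
      W = fun r => (1 / (2 * K)) * (inner ℝ (θe r) (θe r) : ℝ) + β * (η r) ^ 2 := ⟨_, rfl⟩
  have hWnn : ∀ r, 0 ≤ W r := by
    intro r
    have h1 : (0:ℝ) ≤ (inner ℝ (θe r) (θe r) : ℝ) := real_inner_self_nonneg
    have h2 : (0:ℝ) ≤ (η r) ^ 2 := sq_nonneg _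
    rw [hW_def]
    have h3 : (0:ℝ) < 1 / (2 * K) := by positivity
    nlinarith
  have hWθ : ∀ r, ‖θe r‖ ^ 2 ≤ 2 * K * W r := by
    intro r
    have h1 : (inner ℝ (θe r) (θe r) : ℝ) = ‖θe r‖ ^ 2 := real_inner_self_eq_norm_sq _
    have h2 : (0:ℝ) ≤ (η r) ^ 2 := sq_nonneg _
    simp only [hW_def]
    rw [mul_add, ← mul_assoc, h1]
    have : 2 * K * (1 / (2 * K)) = 1 := by field_simp
    rw [this]
    have h4 : (0:ℝ) ≤ 2 * K * (β * (η r)^2) := by positivity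
    linarith
  have hWη : ∀ r, (η r) ^ 2 ≤ W r / β := by
    intro r
    rw [le_div_iff₀ hβ0]
    have h1 : (0:ℝ) ≤ (inner ℝ (θe r) (θe r) : ℝ) := real_inner_self_nonneg
    rw [hW_def]
    have h2 : (0:ℝ) ≤ 1 / (2 * K) * (inner ℝ (θe r) (θe r) : ℝ) := by positivity
    nlinarith
  -- derivative of θe in convenient form
  obtain ⟨θd, hθd_def⟩ : ∃ f : ℝ → EuclideanSpace ℝ (Fin 4),
      f = fun s => (-(K * u s) - K * η s) • ψ s := ⟨_, rfl⟩
  have hθd : ∀ s ≥ (0:ℝ), HasDerivAt θe (θd s) s := by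
    intro s hs
    have h := hθ s hs
    rw [hθd_def]
    simp only [hu_def, sub_smul, neg_smul]
    exact h
  -- derivative of W
  obtain ⟨Wd, hWd_def⟩ : ∃ F : ℝ → ℝ, F = fun s =>
      (1 / (2 * K)) * (2 * ((-(K * u s) - K * η s) * u s)) + β * (2 * η s * (-L' * η s))
    := ⟨_, rfl⟩
  have hWdeq : ∀ s, Wd s = -(u s) ^ 2 - u s * η s - 2 * β * L' * (η s) ^ 2 := by
    intro s
    rw [hWd_def]
    field_simp
    ring
  have hWd : ∀ s ≥ (0:ℝ), HasDerivAt W (Wd s) s := by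
    intro s hs
    have h1 : HasDerivAt (fun r => (inner ℝ (θe r) (θe r) : ℝ))
        ((inner ℝ (θe s) (θd s) : ℝ) + (inner ℝ (θd s) (θe s) : ℝ)) s :=
      HasDerivAt.inner ℝ (hθd s hs) (hθd s hs)
    have h2 : HasDerivAt (fun r => (η r) ^ 2) (2 * η s ^ 1 * (-L' * η s)) s := by
      have h : HasDerivAt (η ^ 2) (2 * η s ^ 1 * (-L' * η s)) s := by simpa using (hη s hs).pow 2
      exact h
    have h3 := (HasDerivAt.const_mul (1 / (2 * K)) h1).add (HasDerivAt.const_mul β h2)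
    rw [hW_def, hWd_def]
    refine h3.congr_deriv ?_
    have hi : (inner ℝ (θd s) (θe s) : ℝ) = (-(K * u s) - K * η s) * u s := by
      rw [hθd_def, hu_def]
      simp only [real_inner_smul_left]
    have hi2 : (inner ℝ (θe s) (θd s) : ℝ) = (-(K * u s) - K * η s) * u s := by
      rw [real_inner_comm]; exact hi
    rw [hi, hi2]; ring
  have hWdle : ∀ s, Wd s ≤ -(1 / 2) * (u s) ^ 2 - κ * (η s) ^ 2 := by
    intro s
    rw [hWdeq s]
    nlinarith [sq_nonneg (u s + η s), hβκ]
  have hWdle0 : ∀ s, Wd s ≤ 0 := by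
    intro s
    have h := hWdle s
    nlinarith [sq_nonneg (u s), sq_nonneg (η s), mul_nonneg hκ0.le (sq_nonneg (η s))]
  -- integrability on windows
  have intfacts : ∀ p q : ℝ, 0 ≤ p → p ≤ q →
      IntervalIntegrable u volume p q ∧
      IntervalIntegrable (fun s => u s ^ 2) volume p q ∧
      IntervalIntegrable η volume p q ∧
      IntervalIntegrable (fun s => η s ^ 2) volume p q ∧
      IntervalIntegrable Wd volume p q ∧
      IntervalIntegrable θd volume p q := by
    intro p q hp hq
    have hsub : Set.Icc p q ⊆ Set.Ici 0 := fun s hs => le_trans hp hs.1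
    have hsub' : Set.Ioc p q ⊆ Set.Icc p q := Set.Ioc_subset_Icc_self
    obtain ⟨C, hC⟩ := (isCompact_Icc : IsCompact (Set.Icc p q)).exists_bound_of_continuousOn
      (hθc.mono hsub)
    have hC0 : 0 ≤ C := le_trans (norm_nonneg _) (hC p (Set.mem_Icc.mpr ⟨le_refl p, hq⟩))
    have mθ : AEStronglyMeasurable θe (volume.restrict (Set.Ioc p q)) :=
      ((hθc.mono (fun s hs => hsub (hsub' hs))).aestronglyMeasurable measurableSet_Ioc)
    have mη : AEStronglyMeasurable η (volume.restrict (Set.Ioc p q)) :=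
      ((hηc.mono (fun s hs => hsub (hsub' hs))).aestronglyMeasurable measurableSet_Ioc)
    have mψ : AEStronglyMeasurable ψ (volume.restrict (Set.Ioc p q)) :=
      hψmeas.aestronglyMeasurable.restrict
    have mu : AEStronglyMeasurable u (volume.restrict (Set.Ioc p q)) := by
      rw [hu_def]; exact mψ.inner mθ
    have hubd : ∀ s ∈ Set.Icc p q, |u s| ≤ M * C := by
      intro s hs
      rw [hu_def]
      calc |(inner ℝ (ψ s) (θe s) : ℝ)| ≤ ‖ψ s‖ * ‖θe s‖ := abs_real_inner_le_norm _ _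
        _ ≤ M * C := mul_le_mul (hψbdd s) (hC s hs) (norm_nonneg _) hM0
    have hηbd : ∀ s ∈ Set.Icc p q, |η s| ≤ |η p| := fun s hs => hηdec p hp s hs.1
    have iu : IntervalIntegrable u volume p q :=
      bdd_integrable (C := M * C) hq mu (fun s hs => by
        rw [Real.norm_eq_abs]; exact hubd s (hsub' hs))
    have iu2 : IntervalIntegrable (fun s => u s ^ 2) volume p q := by
      refine bdd_integrable (C := (M*C)^2) hq (by have h : AEStronglyMeasurable (fun s => u s * u s) _ := mu.mul mu; simpa [pow_two] using h) (fun s hs => ?_)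
      rw [Real.norm_eq_abs, abs_pow]
      exact pow_le_pow_left₀ (abs_nonneg _) (hubd s (hsub' hs)) 2
    have iη : IntervalIntegrable η volume p q :=
      bdd_integrable (C := |η p|) hq mη (fun s hs => by
        rw [Real.norm_eq_abs]; exact hηbd s (hsub' hs))
    have iη2 : IntervalIntegrable (fun s => η s ^ 2) volume p q := by
      refine bdd_integrable (C := |η p|^2) hq (by have h : AEStronglyMeasurable (fun s => η s * η s) _ := mη.mul mη; simpa [pow_two] using h) (fun s hs => ?_)
      rw [Real.norm_eq_abs, abs_pow]
      exact pow_le_pow_left₀ (abs_nonneg _) (hηbd s (hsub' hs)) 2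
    have iWd : IntervalIntegrable Wd volume p q := by
      have mWd : AEStronglyMeasurable Wd (volume.restrict (Set.Ioc p q)) := by
        rw [hWd_def]
        exact ((((((mu.const_mul K).neg.sub (mη.const_mul K)).mul mu).const_mul
          2).const_mul (1/(2*K))).add
          (((mη.const_mul 2).mul (mη.const_mul (-L'))).const_mul β))
      refine bdd_integrable (C := (M*C)^2 + (M*C)*|η p| + 2*β*L'*(η p)^2) hq mWd (fun s hs => ?_)
      have h1 := hubd s (hsub' hs)
      have h2 := hηbd s (hsub' hs)
      have h3 : |u s * η s| ≤ (M*C) * |η p| := by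
        rw [abs_mul]; exact mul_le_mul h1 h2 (abs_nonneg _) (by positivity)
      have h4 : (η s)^2 ≤ (η p)^2 := by nlinarith [abs_nonneg (η s), sq_abs (η s), sq_abs (η p)]
      have h5 : (u s)^2 ≤ (M*C)^2 := by nlinarith [abs_nonneg (u s), sq_abs (u s)]
      have h6 : 2*β*L'*(η s)^2 ≤ 2*β*L'*(η p)^2 :=
        mul_le_mul_of_nonneg_left h4 (by positivity)
      rw [Real.norm_eq_abs, hWdeq s, abs_le]
      constructor
      · nlinarith [neg_abs_le (u s * η s), le_abs_self (u s * η s), sq_nonneg (u s),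
          sq_nonneg (η s), mul_pos (mul_pos (by linarith : (0:ℝ) < 2*β) hL) hβ0,
          mul_nonneg (mul_nonneg (by linarith : (0:ℝ) ≤ 2*β) hL.le) (sq_nonneg (η s))]
      · nlinarith [neg_abs_le (u s * η s), le_abs_self (u s * η s), sq_nonneg (u s),
          sq_nonneg (η s),
          mul_nonneg (mul_nonneg (by linarith : (0:ℝ) ≤ 2*β) hL.le) (sq_nonneg (η p))]
    have iθd : IntervalIntegrable θd volume p q := by
      have mθd : AEStronglyMeasurable θd (volume.restrict (Set.Ioc p q)) := by
        rw [hθd_def]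
        exact ((mu.const_mul K).neg.sub (mη.const_mul K)).smul mψ
      refine bdd_integrable (C := (K*(M*C)+K*|η p|)*M) hq mθd (fun s hs => ?_)
      have h1 := hubd s (hsub' hs)
      have h2 := hηbd s (hsub' hs)
      have hc : |(-(K * u s) - K * η s)| ≤ K*(M*C) + K*|η p| := by
        calc |(-(K * u s) - K * η s)| ≤ |(-(K * u s))| + |K * η s| := abs_sub _ _
          _ = K * |u s| + K * |η s| := by
              rw [abs_neg, abs_mul, abs_mul, abs_of_pos hK]
          _ ≤ K*(M*C) + K*|η p| := by
              have := mul_le_mul_of_nonneg_left h1 hK.le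
              have := mul_le_mul_of_nonneg_left h2 hK.le
              linarith
      rw [hθd_def]
      simp only [norm_smul, Real.norm_eq_abs]
      calc |(-(K * u s) - K * η s)| * ‖ψ s‖ ≤ (K*(M*C) + K*|η p|) * M := by
            apply mul_le_mul hc (hψbdd s) (norm_nonneg _) (by positivity)
        _ = (K*(M*C) + K*|η p|) * M := rfl
    exact ⟨iu, iu2, iη, iη2, iWd, iθd⟩
  -- FTC
  have hftc : ∀ p q : ℝ, 0 ≤ p → p ≤ q → W q - W p = ∫ s in p..q, Wd s := by
    intro p q hp hq
    refine (intervalIntegral.integral_eq_sub_of_hasDerivAt (fun s hs => ?_)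
      ((intfacts p q hp hq).2.2.2.2.1)).symm
    rw [Set.uIcc_of_le hq] at hs
    exact hWd s (le_trans hp hs.1)
  have hθftc : ∀ p q : ℝ, 0 ≤ p → p ≤ q → θe q - θe p = ∫ s in p..q, θd s := by
    intro p q hp hq
    refine (intervalIntegral.integral_eq_sub_of_hasDerivAt (fun s hs => ?_)
      ((intfacts p q hp hq).2.2.2.2.2)).symm
    rw [Set.uIcc_of_le hq] at hs
    exact hθd s (le_trans hp hs.1)
  -- W is antitone on [0, ∞)
  have hWmono : ∀ p q : ℝ, 0 ≤ p → p ≤ q → W q ≤ W p := by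
    intro p q hp hq
    have h1 := hftc p q hp hq
    have h2 : (∫ s in p..q, Wd s) ≤ 0 := by
      have := intervalIntegral.integral_mono_on hq ((intfacts p q hp hq).2.2.2.2.1)
        intervalIntegrable_const (fun s _ => hWdle0 s)
      simpa using this
    linarith
  -- key window decrease
  have hkey : ∀ t : ℝ, 0 ≤ t → W (t + τ) ≤ (1 - γ) * W t := by
    intro t ht
    have htt : t ≤ t + τ := by linarith
    obtain ⟨iu, iu2, iη, iη2, iWd, iθd⟩ := intfacts t (t + τ) ht htt
    obtain ⟨A, hA⟩ : ∃ A : ℝ, A = ∫ s in t..(t+τ), (u s)^2 := ⟨_, rfl⟩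
    obtain ⟨B, hB⟩ : ∃ B : ℝ, B = ∫ s in t..(t+τ), (η s)^2 := ⟨_, rfl⟩
    obtain ⟨Ju, hJu⟩ : ∃ J : ℝ, J = ∫ s in t..(t+τ), |u s| := ⟨_, rfl⟩
    obtain ⟨Jη, hJη⟩ : ∃ J : ℝ, J = ∫ s in t..(t+τ), |η s| := ⟨_, rfl⟩
    have hA0 : 0 ≤ A := by
      rw [hA]; exact intervalIntegral.integral_nonneg htt (fun s _ => sq_nonneg _)
    have hB0 : 0 ≤ B := by
      rw [hB]; exact intervalIntegral.integral_nonneg htt (fun s _ => sq_nonneg _)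
    have hJu0 : 0 ≤ Ju := by
      rw [hJu]; exact intervalIntegral.integral_nonneg htt (fun s _ => abs_nonneg _)
    have hJη0 : 0 ≤ Jη := by
      rw [hJη]; exact intervalIntegral.integral_nonneg htt (fun s _ => abs_nonneg _)
    -- (a) energy decrease over the window
    have hdec : W (t+τ) - W t ≤ -(1/2) * A - κ * B := by
      rw [hftc t (t+τ) ht htt, hA, hB]
      have hint : IntervalIntegrable (fun s => -(1/2) * (u s)^2 - κ * (η s)^2) volume t (t+τ) :=
        (iu2.const_mul (-(1/2))).sub (iη2.const_mul κ)
      have h := intervalIntegral.integral_mono_on htt iWd hint (fun s _ => hWdle s)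
      rw [intervalIntegral.integral_sub (iu2.const_mul (-(1/2))) (iη2.const_mul κ),
        intervalIntegral.integral_const_mul, intervalIntegral.integral_const_mul] at h
      linarith
    -- (b) variation bound
    have hvar : ∀ s ∈ Set.Icc t (t+τ), ‖θe s - θe t‖ ≤ K * M * (Ju + Jη) := by
      intro s hs
      have hts : t ≤ s := hs.1
      obtain ⟨iu', -, iη', -, -, iθd'⟩ := intfacts t s ht hts
      have hptw : ∀ r ∈ Set.Icc t s, ‖θd r‖ ≤ K * M * (|u r| + |η r|) := by
        intro r hr
        rw [hθd_def]
        simp only [norm_smul, Real.norm_eq_abs]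
        have h1 : |(-(K * u r) - K * η r)| ≤ K * (|u r| + |η r|) := by
          calc |(-(K * u r) - K * η r)| ≤ |(-(K * u r))| + |K * η r| := abs_sub _ _
            _ = K * |u r| + K * |η r| := by rw [abs_neg, abs_mul, abs_mul, abs_of_pos hK]
            _ = K * (|u r| + |η r|) := by ring
        calc |(-(K * u r) - K * η r)| * ‖ψ r‖ ≤ (K * (|u r| + |η r|)) * M :=
              mul_le_mul h1 (hψbdd r) (norm_nonneg _) (by positivity)
          _ = K * M * (|u r| + |η r|) := by ring
      have he : θe s - θe t = ∫ r in t..s, θd r := hθftc t s ht hts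
      rw [he]
      calc ‖∫ r in t..s, θd r‖ ≤ ∫ r in t..s, ‖θd r‖ :=
            intervalIntegral.norm_integral_le_integral_norm hts
        _ ≤ ∫ r in t..s, K * M * (|u r| + |η r|) :=
            intervalIntegral.integral_mono_on hts iθd'.norm
              ((iu'.abs.add iη'.abs).const_mul (K*M)) hptw
        _ = K * M * ((∫ r in t..s, |u r|) + ∫ r in t..s, |η r|) := by
            rw [intervalIntegral.integral_const_mul,
              intervalIntegral.integral_add iu'.abs iη'.abs]
        _ ≤ K * M * (Ju + Jη) := by
            have hmu : (∫ r in t..s, |u r|) ≤ Ju := by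
              rw [hJu]
              exact intervalIntegral.integral_mono_interval (le_refl t) hts hs.2
                (Filter.Eventually.of_forall (fun r => abs_nonneg _)) iu.abs
            have hmη : (∫ r in t..s, |η r|) ≤ Jη := by
              rw [hJη]
              exact intervalIntegral.integral_mono_interval (le_refl t) hts hs.2
                (Filter.Eventually.of_forall (fun r => abs_nonneg _)) iη.abs
            have hKM : (0:ℝ) ≤ K * M := by positivity
            nlinarith
    -- (c) PE estimate
    have mψ' : AEStronglyMeasurable ψ (volume.restrict (Set.Ioc t (t+τ))) :=
      hψmeas.aestronglyMeasurable.restrict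
    have mv : AEStronglyMeasurable (fun s => (inner ℝ (ψ s) (θe t) : ℝ))
        (volume.restrict (Set.Ioc t (t+τ))) := mψ'.inner aestronglyMeasurable_const
    have iv : IntervalIntegrable (fun s => (inner ℝ (ψ s) (θe t) : ℝ)^2) volume t (t+τ) := by
      refine bdd_integrable (C := (M * ‖θe t‖)^2) htt (by have h : AEStronglyMeasurable (fun s => (inner ℝ (ψ s) (θe t) : ℝ) * (inner ℝ (ψ s) (θe t) : ℝ)) _ := mv.mul mv; simpa [pow_two] using h)
        (fun s hs => ?_)
      rw [Real.norm_eq_abs, abs_pow]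
      refine pow_le_pow_left₀ (abs_nonneg _) ?_ 2
      calc |(inner ℝ (ψ s) (θe t) : ℝ)| ≤ ‖ψ s‖ * ‖θe t‖ := abs_real_inner_le_norm _ _
        _ ≤ M * ‖θe t‖ := mul_le_mul_of_nonneg_right (hψbdd s) (norm_nonneg _)
    have hptPE : ∀ s ∈ Set.Icc t (t+τ),
        (inner ℝ (ψ s) (θe t) : ℝ)^2 ≤ 2*(u s)^2 + 2*(M * (K*M*(Ju+Jη)))^2 := by
      intro s hs
      have hsplit : (inner ℝ (ψ s) (θe t) : ℝ) = u s + (inner ℝ (ψ s) (θe t - θe s) : ℝ) := by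
        rw [hu_def]
        simp only [inner_sub_right]
        ring
      have h2 : |(inner ℝ (ψ s) (θe t - θe s) : ℝ)| ≤ M * (K*M*(Ju+Jη)) := by
        calc |(inner ℝ (ψ s) (θe t - θe s) : ℝ)| ≤ ‖ψ s‖ * ‖θe t - θe s‖ :=
              abs_real_inner_le_norm _ _
          _ ≤ M * (K*M*(Ju+Jη)) := by
              rw [norm_sub_rev]
              exact mul_le_mul (hψbdd s) (hvar s hs) (norm_nonneg _) hM0
      rw [hsplit]
      nlinarith [sq_nonneg (u s - (inner ℝ (ψ s) (θe t - θe s) : ℝ)),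
        sq_abs ((inner ℝ (ψ s) (θe t - θe s) : ℝ)),
        mul_self_le_mul_self (abs_nonneg ((inner ℝ (ψ s) (θe t - θe s) : ℝ))) h2]
    have hPEbound : α * ‖θe t‖^2 ≤ 2*A + τ * (2*(M * (K*M*(Ju+Jη)))^2) := by
      have h0 := hPE t ht (θe t)
      have h1 := intervalIntegral.integral_mono_on htt iv
        ((iu2.const_mul 2).add intervalIntegrable_const) hptPE
      rw [intervalIntegral.integral_add (iu2.const_mul 2) intervalIntegrable_const,
        intervalIntegral.integral_const_mul, intervalIntegral.integral_const] at h1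
      simp only [add_sub_cancel_left, smul_eq_mul] at h1
      rw [hA]
      linarith
    -- Cauchy-Schwarz
    have hJu2 : Ju^2 ≤ τ * A := by
      have h := cs_sq htt iu iu2
      rw [hJu, hA]
      simpa using h
    have hJη2 : Jη^2 ≤ τ * B := by
      have h := cs_sq htt iη iη2
      rw [hJη, hB]
      simpa using h
    -- (d) bounds on B
    have hBlb : c₂ * (η t)^2 ≤ B := by
      have hpt : ∀ s ∈ Set.Icc t (t+τ), Real.exp (-(2*L'*τ)) * (η t)^2 ≤ (η s)^2 := by
        intro s hs
        have h1 : η s = η t * Real.exp (-(L' * (s - t))) := hηs t ht s hs.1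
        have hex : (Real.exp (-(L'*(s-t))))^2 = Real.exp (-(2*L'*(s-t))) := by
          rw [pow_two, ← Real.exp_add]
          congr 1
          ring
        have h2 : (η s)^2 = (η t)^2 * Real.exp (-(2*L'*(s-t))) := by
          rw [h1, mul_pow, hex]
        have h3 : Real.exp (-(2*L'*τ)) ≤ Real.exp (-(2*L'*(s-t))) := by
          apply Real.exp_le_exp.mpr
          have h4 : s - t ≤ τ := by linarith [hs.2]
          have h5 := mul_le_mul_of_nonneg_left h4 (by linarith : (0:ℝ) ≤ 2*L')
          linarith [h5]
        rw [h2, mul_comm ((η t)^2) (Real.exp (-(2*L'*(s-t))))]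
        exact mul_le_mul_of_nonneg_right h3 (sq_nonneg _)
      have h := intervalIntegral.integral_mono_on htt intervalIntegrable_const iη2 hpt
      rw [intervalIntegral.integral_const, smul_eq_mul,
        show t + τ - t = τ by ring] at h
      rw [hB, hc2_def]
      linarith [h]
    -- combine everything
    have hWt : W t = (1/(2*K)) * ‖θe t‖^2 + β * (η t)^2 := by
      rw [hW_def]
      simp only [real_inner_self_eq_norm_sq]
    have hγ1 : γ ≤ 2 * K * a := by rw [hγ_def]; exact min_le_left _ _
    have hγ2 : γ ≤ 1 / β := by rw [hγ_def]; exact le_trans (min_le_right _ _) (min_le_left _ _)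
    have hJsum : (Ju + Jη)^2 ≤ 2*τ*A + 2*τ*B := jsum_sq hJu2 hJη2
    have hPEfin : α * ‖θe t‖^2 ≤ (2 + D) * A + D * B := by
      have h1 : τ * (2*(M * (K*M*(Ju+Jη)))^2) = 2*K^2*M^4*τ*(Ju+Jη)^2 := by ring
      have h2 : 2*K^2*M^4*τ*(Ju+Jη)^2 ≤ 2*K^2*M^4*τ*(2*τ*A + 2*τ*B) :=
        mul_le_mul_of_nonneg_left hJsum (by positivity)
      have h3 : 2*K^2*M^4*τ*(2*τ*A + 2*τ*B) = D*A + D*B := by rw [hD_def]; ring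
      linarith [hPEbound]
    have hsuf : γ * W t ≤ (1/2) * A + κ * B := by
      have P0 : (0:ℝ) ≤ ‖θe t‖^2 := sq_nonneg _
      have e0 : (0:ℝ) ≤ (η t)^2 := sq_nonneg _
      have s1 : γ * ((1/(2*K)) * ‖θe t‖^2) ≤ a * ‖θe t‖^2 := by
        have h1 : γ * (1/(2*K)) ≤ a := by
          have h2 := mul_le_mul_of_nonneg_right hγ1 (by positivity : (0:ℝ) ≤ 1/(2*K))
          have h3 : 2*K*a*(1/(2*K)) = a := by field_simp
          linarith
        calc γ * ((1/(2*K)) * ‖θe t‖^2) = (γ * (1/(2*K))) * ‖θe t‖^2 := by ring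
          _ ≤ a * ‖θe t‖^2 := mul_le_mul_of_nonneg_right h1 P0
      have s2 : γ * (β * (η t)^2) ≤ (η t)^2 := by
        have h1 : γ * β ≤ 1 := by
          have h2 := mul_le_mul_of_nonneg_right hγ2 hβ0.le
          have h3 : (1/β)*β = 1 := by field_simp
          linarith
        calc γ * (β * (η t)^2) = (γ*β) * (η t)^2 := by ring
          _ ≤ 1 * (η t)^2 := mul_le_mul_of_nonneg_right h1 e0
          _ = (η t)^2 := one_mul _
      have hE : (0:ℝ) < 2 * (2 + D) := by linarith
      have s3 : a * ‖θe t‖^2 ≤ (1/2) * A + (D/(2*(2+D))) * B := by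
        have h1 := mul_le_mul_of_nonneg_right hPEfin (by positivity : (0:ℝ) ≤ 1/(2*(2+D)))
        have h2 : a * ‖θe t‖^2 = α * ‖θe t‖^2 * (1/(2*(2+D))) := by rw [ha_def]; ring
        have h3 : ((2+D)*A + D*B) * (1/(2*(2+D))) = (1/2)*A + (D/(2*(2+D)))*B := by
          field_simp
        linarith
      have s4 : (η t)^2 ≤ (1/c₂) * B := by
        have h1 := mul_le_mul_of_nonneg_right hBlb (by positivity : (0:ℝ) ≤ 1/c₂)
        have h2 : c₂ * (η t)^2 * (1/c₂) = (η t)^2 := by field_simp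
        have h3 : B * (1/c₂) = (1/c₂) * B := by ring
        linarith
      have s5 : (D/(2*(2+D))) * B + (1/c₂) * B = κ * B := by rw [hκ_def]; ring
      calc γ * W t = γ * ((1/(2*K)) * ‖θe t‖^2) + γ * (β * (η t)^2) := by rw [hWt]; ring
        _ ≤ (1/2)*A + (D/(2*(2+D)))*B + (1/c₂)*B := by linarith
        _ = (1/2)*A + κ*B := by linarith [s5]
    have hfin : (1-γ)*W t = W t - γ * W t := by ring
    linarith [hdec, hsuf]
  -- geometric decay along multiples of τ
  have hgeo : ∀ n : ℕ, W (n * τ) ≤ (1 - γ) ^ n * W 0 := by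
    intro n
    induction n with
    | zero => simp
    | succ n ih =>
      have h1 : ((n : ℝ) * τ) ≥ 0 := by positivity
      have h2 := hkey ((n : ℝ) * τ) h1
      have h3 : ((n + 1 : ℕ) : ℝ) * τ = (n : ℝ) * τ + τ := by push_cast; ring
      rw [h3]
      have h4 : (0:ℝ) ≤ 1 - γ := by linarith
      calc W ((n:ℝ) * τ + τ) ≤ (1 - γ) * W ((n:ℝ) * τ) := h2
        _ ≤ (1 - γ) * ((1 - γ) ^ n * W 0) := mul_le_mul_of_nonneg_left ih h4
        _ = (1 - γ) ^ (n + 1) * W 0 := by ring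
  -- W tends to 0
  have hWtend : Tendsto W atTop (nhds 0) := by
    have h1 : Tendsto (fun n : ℕ => (1 - γ) ^ n * W 0) atTop (nhds 0) := by
      have := (tendsto_pow_atTop_nhds_zero_of_lt_one (by linarith : (0:ℝ) ≤ 1 - γ)
        (by linarith : 1 - γ < 1)).mul_const (W 0)
      simpa using this
    have h2 : Tendsto (fun n : ℕ => W (n * τ)) atTop (nhds 0) :=
      squeeze_zero (fun n => hWnn _) (fun n => hgeo n) h1
    have h3 : Tendsto (fun t : ℝ => (⌊t / τ⌋₊ : ℕ)) atTop atTop :=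
      tendsto_nat_floor_atTop.comp (Tendsto.atTop_div_const hτ tendsto_id)
    have h4 : Tendsto (fun t : ℝ => W ((⌊t / τ⌋₊ : ℝ) * τ)) atTop (nhds 0) := h2.comp h3
    apply squeeze_zero' (g := fun t : ℝ => W ((⌊t / τ⌋₊ : ℝ) * τ))
      (Filter.Eventually.of_forall (fun t => hWnn t)) ?_ h4
    filter_upwards [eventually_ge_atTop (0:ℝ)] with t ht
    have hfl : (⌊t / τ⌋₊ : ℝ) * τ ≤ t := by
      have h5 : (⌊t / τ⌋₊ : ℝ) ≤ t / τ := Nat.floor_le (by positivity)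
      calc (⌊t / τ⌋₊ : ℝ) * τ ≤ (t / τ) * τ := mul_le_mul_of_nonneg_right h5 hτ.le
        _ = t := by field_simp
    exact hWmono _ _ (by positivity) hfl
  constructor
  · exact hηtend
  · rw [tendsto_zero_iff_norm_tendsto_zero]
    have hb : ∀ t, ‖θe t‖ ≤ Real.sqrt (2 * K * W t) := by
      intro t
      rw [← Real.sqrt_sq (norm_nonneg (θe t))]
      exact Real.sqrt_le_sqrt (hWθ t)
    have htend : Tendsto (fun t => Real.sqrt (2 * K * W t)) atTop (nhds 0) := by
      have : Tendsto (fun t => 2 * K * W t) atTop (nhds 0) := by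
        simpa using hWtend.const_mul (2 * K)
      simpa [Function.comp_def] using (Real.continuous_sqrt.tendsto 0).comp this
    exact squeeze_zero (fun t => norm_nonneg _) hb htend
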